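/- arXiv:2109.12954 — 2 statements merged into one kernel-verified Lean document; each statement's English description precedes it below -/
import Mathlib

section
/- Let C be an additive Krull–Schmidt category and f : X₁ ⊕ X₂ → Y₁ ⊕ Y₂ a morphism with π₁ ∘ f ∘ ι₁ in the Jacobson radical of C. If the identity of an object Z factors through f (i.e. there exist g : Z → X₁ ⊕ X₂ and h : Y₁ ⊕ Y₂ → Z with h ∘ f ∘ g = id_Z), then Z is a direct summand of X₂ ⊕ Y₂ ⊕ X₂ ⊕ Y₂ (in particular Z ∈ add(X₂ ⊕ Y₂)). -/
open CategoryTheory CategoryTheory.Limits Opposite ZeroObject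

universe v u

namespace NExangPaper

attribute [local instance] CategoryTheory.Limits.hasBinaryBiproducts_of_finite_biproducts


variable {C : Type u} [Category.{v} C] [Preadditive C]

/-- `f : X ⟶ Y` lies in the Jacobson radical `rad_C` of the preadditive category `C`:
this is the standard characterization `∀ g, 𝟙 X - g ∘ f` is invertible, which for a
Krull–Schmidt category agrees with the ideal whose value at `(A,A)` is the Jacobson
radical of `End A`. -/
def InRad {X Y : C} (f : X ⟶ Y) : Prop := ∀ g : Y ⟶ X, IsIso (𝟙 X - f ≫ g)

/-- `C` is a Krull–Schmidt category: every object is a finite direct sum of objects with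
local endomorphism rings. -/
def IsKrullSchmidt (C : Type u) [Category.{v} C] [Preadditive C] [HasFiniteBiproducts C] : Prop :=
  ∀ X : C, ∃ (k : ℕ) (Y : Fin k → C) (_ : X ≅ ⨁ Y), ∀ i, IsLocalRing (End (Y i))

/-- `Z` belongs to `add W`, i.e. `Z` is a direct summand of a finite direct sum of copies of `W`. -/
def InAdd {C : Type u} [Category.{v} C] [Preadditive C] [HasFiniteBiproducts C]
    (W Z : C) : Prop :=
  ∃ (k : ℕ) (r : Z ⟶ ⨁ fun _ : Fin k => W) (s : (⨁ fun _ : Fin k => W) ⟶ Z), r ≫ s = 𝟙 Z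

/-- An object of the category `C^{n+2}_C` of complexes concentrated in degrees `0,…,n+1`.
(The terms in degrees `> n+1` are irrelevant junk; all conditions only concern degrees
`0,…,n+1`.) -/
structure NComplex (C : Type u) [Category.{v} C] [Preadditive C] (n : ℕ) where
  X : ℕ → C
  d : ∀ i, X i ⟶ X (i + 1)
  dd : ∀ i, i + 1 ≤ n → d i ≫ d (i + 1) = 0

variable {n : ℕ}

/-- A morphism of complexes concentrated in degrees `0,…,n+1`. -/
@[ext]
structure ChainMap (X Y : NComplex C n) where
  f : ∀ i, X.X i ⟶ Y.X i
  comm : ∀ i, i ≤ n → X.d i ≫ f (i + 1) = f i ≫ Y.d i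

def ChainMap.id (X : NComplex C n) : ChainMap X X where
  f _ := 𝟙 _
  comm _ _ := by simp

def ChainMap.comp {X Y Z : NComplex C n} (φ : ChainMap X Y) (ψ : ChainMap Y Z) :
    ChainMap X Z where
  f i := φ.f i ≫ ψ.f i
  comm i hi := by rw [← Category.assoc, φ.comm i hi, Category.assoc, ψ.comm i hi,
    ← Category.assoc]

/-- A chain homotopy between two morphisms of complexes concentrated in degrees `0,…,n+1`. -/
structure Homotopy' {X Y : NComplex C n} (φ ψ : ChainMap X Y) where
  s : ∀ i, X.X (i + 1) ⟶ Y.X i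
  comm0 : φ.f 0 - ψ.f 0 = X.d 0 ≫ s 0
  comm : ∀ i, i + 1 ≤ n → φ.f (i + 1) - ψ.f (i + 1) = s i ≫ Y.d i + X.d (i + 1) ≫ s (i + 1)
  commTop : φ.f (n + 1) - ψ.f (n + 1) = s n ≫ Y.d n

/-- Homotopy equivalence of complexes concentrated in degrees `0,…,n+1`. -/
def HtpyEquiv (X Y : NComplex C n) : Prop :=
  ∃ (φ : ChainMap X Y) (ψ : ChainMap Y X),
    Nonempty (Homotopy' (φ.comp ψ) (ChainMap.id X)) ∧
    Nonempty (Homotopy' (ψ.comp φ) (ChainMap.id Y))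

/-- Homotopy equivalence with identities at the two ends (i.e. homotopy equivalence in the
category `C^{n+2}_{(A,C)}` of complexes with fixed end terms). -/
def FixedHtpyEquiv (X Y : NComplex C n) (h0 : X.X 0 = Y.X 0)
    (h1 : X.X (n + 1) = Y.X (n + 1)) : Prop :=
  ∃ (φ : ChainMap X Y) (ψ : ChainMap Y X),
    φ.f 0 = eqToHom h0 ∧ φ.f (n + 1) = eqToHom h1 ∧
    ψ.f 0 = eqToHom h0.symm ∧ ψ.f (n + 1) = eqToHom h1.symm ∧
    Nonempty (Homotopy' (φ.comp ψ) (ChainMap.id X)) ∧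
    Nonempty (Homotopy' (ψ.comp φ) (ChainMap.id Y))

/-- An isomorphism of complexes concentrated in degrees `0,…,n+1` (levelwise isomorphisms in
the relevant degrees, commuting with the differentials). -/
structure CpxIso (X Y : NComplex C n) where
  e : ∀ i, i ≤ n + 1 → (X.X i ≅ Y.X i)
  comm : ∀ i (hi : i ≤ n),
    X.d i ≫ (e (i + 1) (by omega)).hom = (e i (by omega)).hom ≫ Y.d i

/-- Degreewise direct sum of complexes. -/
noncomputable def biprodC [HasBinaryBiproducts C] (X Y : NComplex C n) : NComplex C n where
  X i := X.X i ⊞ Y.X i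
  d i := biprod.map (X.d i) (Y.d i)
  dd i hi := by
    ext <;> simp [X.dd i hi, Y.dd i hi]

/-- The complex `0 → ⋯ → 0 → Z →(𝟙) Z → 0 → ⋯ → 0` with `Z` placed in degrees `k` and
`k+1`. -/
noncomputable def splitCpx [HasZeroObject C] (Z : C) (k : ℕ) : NComplex C n where
  X j := if j = k ∨ j = k + 1 then Z else 0
  d j :=
    if h : j = k then
      eqToHom (by subst h; simp)
    else 0
  dd j hj := by
    by_cases h : j = k
    · simp [dif_neg (show ¬ j + 1 = k by omega)]
    · simp [dif_neg h]

/-- The zero complex. -/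
noncomputable def zeroCpx [HasZeroObject C] : NComplex C n where
  X _ := 0
  d _ := 0
  dd _ _ := by simp

/-- Image of a complex under an additive functor. -/
def mapCpx {D : Type u} [Category.{v} D] [Preadditive D] (F : C ⥤ D) [F.Additive]
    (X : NComplex C n) : NComplex D n where
  X i := F.obj (X.X i)
  d i := F.map (X.d i)
  dd i hi := by rw [← F.map_comp, X.dd i hi, F.map_zero]

section Exang

variable (C) (n)

/-- The underlying data of an `n`-exangulated category: an additive `Ab`-valued bifunctor `E`
and a class of distinguished `n`-exangles (a complex concentrated in degrees `0,…,n+1`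
together with an `E`-extension attached to its end terms). -/
structure NExangData where
  E : Cᵒᵖ ⥤ C ⥤ AddCommGrpCat.{v}
  Dist : ∀ X : NComplex C n, ((E.obj (op (X.X (n + 1)))).obj (X.X 0)) → Prop

variable {C n}

/-- Transport of an `E`-extension along equalities of its end objects. -/
def ETransport (E : Cᵒᵖ ⥤ C ⥤ AddCommGrpCat.{v}) {A A' B B' : C} (hA : A = A') (hB : B = B')
    (δ : (E.obj (op B)).obj A) : (E.obj (op B')).obj A' :=
  (E.map (eqToHom hB.symm).op).app A' (((E.obj (op B)).map (eqToHom hA)) δ)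

/-- `f` is an `s`-inflation: it is the `0`-th differential of some distinguished `n`-exangle. -/
def NExangData.Inflation (S : NExangData C n) {A B : C} (f : A ⟶ B) : Prop :=
  ∃ (X : NComplex C n) (δ : (S.E.obj (op (X.X (n + 1)))).obj (X.X 0))
    (h0 : X.X 0 = A) (h1 : X.X 1 = B),
      S.Dist X δ ∧ X.d 0 = eqToHom h0 ≫ f ≫ eqToHom h1.symm

/-- `f` is an `s`-deflation: it is the `n`-th differential of some distinguished `n`-exangle. -/
def NExangData.Deflation (S : NExangData C n) {A B : C} (f : A ⟶ B) : Prop :=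
  ∃ (X : NComplex C n) (δ : (S.E.obj (op (X.X (n + 1)))).obj (X.X 0))
    (h0 : X.X n = A) (h1 : X.X (n + 1) = B),
      S.Dist X δ ∧ X.d n = eqToHom h0 ≫ f ≫ eqToHom h1.symm

/-- `M` is (a choice of) the mapping cone of a morphism `f• : X• → Y•` with `f₀ = id`:
`M : X₁ → X₂ ⊕ Y₁ → ⋯ → X_{n+1} ⊕ Y_n → Y_{n+1}`, encoded via binary biproduct (bicone)
data in the middle degrees and the usual matrix differentials. -/
def IsMappingCone {X Y : NComplex C n} (φ : ChainMap X Y) (M : NComplex C n) : Prop :=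
  ∃ (h0 : M.X 0 = X.X 1) (htop : M.X (n + 1) = Y.X (n + 1))
    (p : ∀ i, 1 ≤ i → i ≤ n → (M.X i ⟶ X.X (i + 1)))
    (q : ∀ i, 1 ≤ i → i ≤ n → (M.X i ⟶ Y.X i))
    (ι₁ : ∀ i, 1 ≤ i → i ≤ n → (X.X (i + 1) ⟶ M.X i))
    (ι₂ : ∀ i, 1 ≤ i → i ≤ n → (Y.X i ⟶ M.X i)),
    (∀ i (h1 : 1 ≤ i) (h2 : i ≤ n),
      ι₁ i h1 h2 ≫ p i h1 h2 = 𝟙 _ ∧ ι₂ i h1 h2 ≫ q i h1 h2 = 𝟙 _ ∧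
      ι₁ i h1 h2 ≫ q i h1 h2 = 0 ∧ ι₂ i h1 h2 ≫ p i h1 h2 = 0 ∧
      p i h1 h2 ≫ ι₁ i h1 h2 + q i h1 h2 ≫ ι₂ i h1 h2 = 𝟙 (M.X i)) ∧
    (∀ hn : 1 ≤ n,
      M.d 0 ≫ p 1 le_rfl hn = eqToHom h0 ≫ (-(X.d 1)) ∧
      M.d 0 ≫ q 1 le_rfl hn = eqToHom h0 ≫ φ.f 1) ∧
    (∀ i (h1 : 1 ≤ i) (h2 : i + 1 ≤ n),
      M.d i = p i h1 (by omega) ≫ (-(X.d (i + 1))) ≫ ι₁ (i + 1) (by omega) h2 +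
        p i h1 (by omega) ≫ φ.f (i + 1) ≫ ι₂ (i + 1) (by omega) h2 +
        q i h1 (by omega) ≫ Y.d i ≫ ι₂ (i + 1) (by omega) h2) ∧
    (∀ hn : 1 ≤ n,
      M.d n = p n hn le_rfl ≫ φ.f (n + 1) ≫ eqToHom htop.symm +
        q n hn le_rfl ≫ Y.d n ≫ eqToHom htop.symm)

/-- `N` is (a choice of) the mapping cocone of a morphism `f• : X• → Y•` with `f_{n+1} = id`:
`N : X₀ → X₁ ⊕ Y₀ → ⋯ → X_n ⊕ Y_{n-1} → Y_n`, encoded via binary biproduct (bicone) data. -/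
def IsMappingCocone {X Y : NComplex C n} (φ : ChainMap X Y) (N : NComplex C n) : Prop :=
  ∃ (h0 : N.X 0 = X.X 0) (htop : N.X (n + 1) = Y.X n)
    (p : ∀ j, j + 1 ≤ n → (N.X (j + 1) ⟶ X.X (j + 1)))
    (q : ∀ j, j + 1 ≤ n → (N.X (j + 1) ⟶ Y.X j))
    (ι₁ : ∀ j, j + 1 ≤ n → (X.X (j + 1) ⟶ N.X (j + 1)))
    (ι₂ : ∀ j, j + 1 ≤ n → (Y.X j ⟶ N.X (j + 1))),
    (∀ j (hj : j + 1 ≤ n),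
      ι₁ j hj ≫ p j hj = 𝟙 _ ∧ ι₂ j hj ≫ q j hj = 𝟙 _ ∧
      ι₁ j hj ≫ q j hj = 0 ∧ ι₂ j hj ≫ p j hj = 0 ∧
      p j hj ≫ ι₁ j hj + q j hj ≫ ι₂ j hj = 𝟙 (N.X (j + 1))) ∧
    (∀ hn : 1 ≤ n,
      N.d 0 = eqToHom h0 ≫ ((-(X.d 0)) ≫ ι₁ 0 hn + φ.f 0 ≫ ι₂ 0 hn)) ∧
    (∀ j (hj : j + 2 ≤ n),
      N.d (j + 1) = p j (by omega) ≫ (-(X.d (j + 1))) ≫ ι₁ (j + 1) hj +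
        p j (by omega) ≫ φ.f (j + 1) ≫ ι₂ (j + 1) hj +
        q j (by omega) ≫ Y.d j ≫ ι₂ (j + 1) hj) ∧
    (∀ j (hj : j + 1 = n),
      N.d (j + 1) = p j (by omega) ≫ φ.f (j + 1) ≫ eqToHom (by rw [hj, htop]) +
        q j (by omega) ≫ Y.d j ≫ eqToHom (by rw [hj, htop]))

variable (C n)

/-- An `n`-exangulated category `(C, E, s)` in the sense of Herschend–Liu–Nakaoka, encoded by
its additive bifunctor `E`, the class `Dist` of (`s`-)distinguished `n`-exangles, and the
axioms: `E` is biadditive, distinguished `n`-exangles are `n`-exangles (R1), the realization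
is defined on every extension (R0 existence of lifts, surjectivity of `s`, invariance under
homotopy equivalence with fixed ends), (R2), (EA1), (EA2) and (EA2ᵒᵖ). -/
structure NExang [HasZeroObject C] extends NExangData C n where
  additive_snd : ∀ A : Cᵒᵖ, (E.obj A).Additive
  additive_fst : ∀ B : C, (E.flip.obj B).Additive
  -- (R1): distinguished n-exangles are n-exangles
  ex_contra_mid : ∀ X δ, Dist X δ → ∀ i, i + 1 ≤ n → ∀ (W : C) (h : W ⟶ X.X (i + 1)),
    h ≫ X.d (i + 1) = 0 → ∃ g : W ⟶ X.X i, g ≫ X.d i = h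
  ex_contra_top : ∀ X δ, Dist X δ → ∀ (W : C) (h : W ⟶ X.X (n + 1)),
    (E.map h.op).app (X.X 0) δ = 0 → ∃ g : W ⟶ X.X n, g ≫ X.d n = h
  ex_co_mid : ∀ X δ, Dist X δ → ∀ i, i + 1 ≤ n → ∀ (W : C) (h : X.X (i + 1) ⟶ W),
    X.d i ≫ h = 0 → ∃ g : X.X (i + 2) ⟶ W, X.d (i + 1) ≫ g = h
  ex_co_bot : ∀ X δ, Dist X δ → ∀ (W : C) (h : X.X 0 ⟶ W),
    ((E.obj (op (X.X (n + 1)))).map h) δ = 0 → ∃ g : X.X 1 ⟶ W, X.d 0 ≫ g = h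
  attached_push : ∀ X δ, Dist X δ → ((E.obj (op (X.X (n + 1)))).map (X.d 0)) δ = 0
  attached_pull : ∀ X δ, Dist X δ → (E.map (X.d n).op).app (X.X 0) δ = 0
  -- (R0): lifts of morphisms of extensions
  lift : ∀ X Y δ ρ, Dist X δ → Dist Y ρ →
    ∀ (a : X.X 0 ⟶ Y.X 0) (c : X.X (n + 1) ⟶ Y.X (n + 1)),
      ((E.obj (op (X.X (n + 1)))).map a) δ = (E.map c.op).app (Y.X 0) ρ →
      ∃ φ : ChainMap X Y, φ.f 0 = a ∧ φ.f (n + 1) = c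
  -- `s` realizes every extension
  realize : ∀ (A B : C) (δ : (E.obj (op B)).obj A),
    ∃ (X : NComplex C n) (h0 : X.X 0 = A) (h1 : X.X (n + 1) = B),
      Dist X (ETransport E h0.symm h1.symm δ)
  -- `s(δ)` is a single homotopy class with fixed ends…
  unique : ∀ X Y δ (h0 : X.X 0 = Y.X 0) (h1 : X.X (n + 1) = Y.X (n + 1)),
    Dist X δ → Dist Y (ETransport E h0 h1 δ) → FixedHtpyEquiv X Y h0 h1
  -- …and is closed under homotopy equivalences with fixed ends
  closedHtpy : ∀ X Y δ (h0 : X.X 0 = Y.X 0) (h1 : X.X (n + 1) = Y.X (n + 1)),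
    Dist X δ → FixedHtpyEquiv X Y h0 h1 → Dist Y (ETransport E h0 h1 δ)
  -- (R2)
  realize_zero₁ : ∀ A : C, Dist (splitCpx A 0) 0
  realize_zero₂ : ∀ A : C, Dist (splitCpx A n) 0
  -- (EA1)
  ea1_infl : ∀ {A B Z : C} (f : A ⟶ B) (g : B ⟶ Z),
    toNExangData.Inflation f → toNExangData.Inflation g → toNExangData.Inflation (f ≫ g)
  ea1_defl : ∀ {A B Z : C} (f : A ⟶ B) (g : B ⟶ Z),
    toNExangData.Deflation f → toNExangData.Deflation g → toNExangData.Deflation (f ≫ g)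
  -- (EA2): good lifts of (𝟙, c) exist, with distinguished mapping cone
  ea2 : ∀ {A D Co : C} (ρ : (E.obj (op D)).obj A) (c : Co ⟶ D) (X Y : NComplex C n)
    (hX0 : X.X 0 = A) (hXn : X.X (n + 1) = Co) (hY0 : Y.X 0 = A) (hYn : Y.X (n + 1) = D),
    Dist X (ETransport E hX0.symm hXn.symm ((E.map c.op).app A ρ)) →
    Dist Y (ETransport E hY0.symm hYn.symm ρ) →
    ∃ φ : ChainMap X Y, φ.f 0 = eqToHom (hX0.trans hY0.symm) ∧
      φ.f (n + 1) = eqToHom hXn ≫ c ≫ eqToHom hYn.symm ∧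
      ∃ M : NComplex C n, IsMappingCone φ M ∧
        ∃ (hM0 : M.X 0 = X.X 1) (hMn : M.X (n + 1) = Y.X (n + 1)),
          Dist M (ETransport E hM0.symm (hMn.trans hYn).symm
            (((E.obj (op D)).map (eqToHom hX0.symm ≫ X.d 0)) ρ))
  -- (EA2ᵒᵖ): good lifts of (a, 𝟙) exist, with distinguished mapping cocone
  ea2op : ∀ {A B D : C} (ρ : (E.obj (op D)).obj A) (a : A ⟶ B) (X Y : NComplex C n)
    (hX0 : X.X 0 = A) (hXn : X.X (n + 1) = D) (hY0 : Y.X 0 = B) (hYn : Y.X (n + 1) = D),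
    Dist X (ETransport E hX0.symm hXn.symm ρ) →
    Dist Y (ETransport E hY0.symm hYn.symm (((E.obj (op D)).map a) ρ)) →
    ∃ φ : ChainMap X Y, φ.f 0 = eqToHom hX0 ≫ a ≫ eqToHom hY0.symm ∧
      φ.f (n + 1) = eqToHom (hXn.trans hYn.symm) ∧
      ∃ N : NComplex C n, IsMappingCocone φ N ∧
        ∃ (hN0 : N.X 0 = X.X 0) (hNn : N.X (n + 1) = Y.X n),
          Dist N (ETransport E (hN0.trans hX0).symm hNn.symm
            ((E.map (Y.d n ≫ eqToHom hYn).op).app A ρ))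

end Exang

section Sub

variable {C : Type u} [Category.{v} C] [Preadditive C] {n : ℕ}

/-- The subcategory determined by `𝒜 ⊆ C` is closed under isomorphisms, finite direct sums
and direct summands. -/
def GoodSubcat [HasBinaryBiproducts C] (𝒜 : Set C) : Prop :=
  (∀ (A B : C), A ∈ 𝒜 → (A ≅ B) → B ∈ 𝒜) ∧
  (∀ (A B : C), A ∈ 𝒜 → B ∈ 𝒜 → (A ⊞ B) ∈ 𝒜) ∧
  (∀ (A B : C) (r : A ⟶ B) (s : B ⟶ A), r ≫ s = 𝟙 A → B ∈ 𝒜 → A ∈ 𝒜)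

/-- `𝒜` is an `n`-extension closed subcategory of `(C, E, s)`: every `E`-extension between
objects of `𝒜` is realized by a distinguished `n`-exangle whose terms in degrees `1,…,n`
belong to `𝒜`. -/
def NExtClosed (S : NExangData C n) (𝒜 : Set C) : Prop :=
  ∀ (A B : C), A ∈ 𝒜 → B ∈ 𝒜 → ∀ δ : (S.E.obj (op B)).obj A,
    ∃ (X : NComplex C n) (h0 : X.X 0 = A) (h1 : X.X (n + 1) = B),
      S.Dist X (ETransport S.E h0.symm h1.symm δ) ∧ ∀ i, 1 ≤ i → i ≤ n → X.X i ∈ 𝒜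

/-- `f` is a `t`-inflation for the structure inherited by the `n`-extension closed
subcategory `𝒜`: it is the `0`-th differential of a distinguished `n`-exangle of `C` all of
whose terms in degrees `1,…,n+1` lie in `𝒜`. -/
def TInfl (S : NExangData C n) (𝒜 : Set C) {A B : C} (f : A ⟶ B) : Prop :=
  ∃ (X : NComplex C n) (δ : (S.E.obj (op (X.X (n + 1)))).obj (X.X 0))
    (h0 : X.X 0 = A) (h1 : X.X 1 = B),
      S.Dist X δ ∧ (∀ i, 1 ≤ i → i ≤ n + 1 → X.X i ∈ 𝒜) ∧
      X.d 0 = eqToHom h0 ≫ f ≫ eqToHom h1.symm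

/-- `P` is a projective object of the `n`-exangulated category. -/
def IsProj (S : NExangData C n) (P : C) : Prop :=
  ∀ X δ, S.Dist X δ → ∀ c : P ⟶ X.X (n + 1), ∃ b : P ⟶ X.X n, b ≫ X.d n = c

/-- `I` is an injective object of the `n`-exangulated category. -/
def IsInj (S : NExangData C n) (I : C) : Prop :=
  ∀ X δ, S.Dist X δ → ∀ c : X.X 0 ⟶ I, ∃ b : X.X 1 ⟶ I, X.d 0 ≫ b = c

/-- The `n`-exangulated category has enough projectives. -/
def EnoughProj (S : NExangData C n) : Prop :=
  ∀ Z : C, ∃ (X : NComplex C n) (δ : (S.E.obj (op (X.X (n + 1)))).obj (X.X 0)),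
    X.X (n + 1) = Z ∧ S.Dist X δ ∧ ∀ i, 1 ≤ i → i ≤ n → IsProj S (X.X i)

/-- The `n`-exangulated category has enough injectives. -/
def EnoughInj (S : NExangData C n) : Prop :=
  ∀ Z : C, ∃ (X : NComplex C n) (δ : (S.E.obj (op (X.X (n + 1)))).obj (X.X 0)),
    X.X 0 = Z ∧ S.Dist X δ ∧ ∀ i, 1 ≤ i → i ≤ n → IsInj S (X.X i)

/-- `Ω𝒜 = CoCone(𝒫, 𝒜)`: objects `B` admitting a distinguished `n`-exangle
`B → P₁ → ⋯ → P_n → A'` with all `P_i` projective and `A' ∈ 𝒜`. -/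
def OmegaSet (S : NExangData C n) (𝒜 : Set C) : Set C :=
  {B | ∃ (X : NComplex C n) (δ : (S.E.obj (op (X.X (n + 1)))).obj (X.X 0)),
    X.X 0 = B ∧ S.Dist X δ ∧ (∀ i, 1 ≤ i → i ≤ n → IsProj S (X.X i)) ∧ X.X (n + 1) ∈ 𝒜}

/-- `Σ𝒜 = Cone(𝒜, ℐ)`: objects `Z` admitting a distinguished `n`-exangle
`A' → I₁ → ⋯ → I_n → Z` with all `I_i` injective and `A' ∈ 𝒜`. -/
def SigmaSet (S : NExangData C n) (𝒜 : Set C) : Set C :=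
  {Z | ∃ (X : NComplex C n) (δ : (S.E.obj (op (X.X (n + 1)))).obj (X.X 0)),
    X.X (n + 1) = Z ∧ S.Dist X δ ∧ (∀ i, 1 ≤ i → i ≤ n → IsInj S (X.X i)) ∧ X.X 0 ∈ 𝒜}

end Sub

section NExact

variable {C : Type u} [Category.{v} C] [Preadditive C] {n : ℕ}

/-- A complex concentrated in degrees `0,…,n+1` is an `n`-exact sequence: for every object
`W` the induced sequences `0 → Hom(W,X₀) → ⋯ → Hom(W,X_{n+1})` and
`0 → Hom(X_{n+1},W) → ⋯ → Hom(X₀,W)` are exact. -/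
structure IsNExactSeq (X : NComplex C n) : Prop where
  mono : ∀ (W : C) (h : W ⟶ X.X 0), h ≫ X.d 0 = 0 → h = 0
  epi : ∀ (W : C) (h : X.X (n + 1) ⟶ W), X.d n ≫ h = 0 → h = 0
  ex_contra : ∀ i, i + 1 ≤ n → ∀ (W : C) (h : W ⟶ X.X (i + 1)),
    h ≫ X.d (i + 1) = 0 → ∃ g : W ⟶ X.X i, g ≫ X.d i = h
  ex_co : ∀ i, i + 1 ≤ n → ∀ (W : C) (h : X.X (i + 1) ⟶ W),
    X.d i ≫ h = 0 → ∃ g : X.X (i + 2) ⟶ W, X.d (i + 1) ≫ g = h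

/-- A weak isomorphism of `n`-exact sequences: a morphism `f•` such that `f_i` and `f_{i+1}`
are isomorphisms for some `0 ≤ i ≤ n+1` (with `f_{n+2} := f₀`). -/
def IsWeakIso {X Y : NComplex C n} (φ : ChainMap X Y) : Prop :=
  (∃ i, i ≤ n ∧ IsIso (φ.f i) ∧ IsIso (φ.f (i + 1))) ∨
  (IsIso (φ.f (n + 1)) ∧ IsIso (φ.f 0))

/-- `f• : X• → Y•` (with `f_{n+1}` an identification of the top terms) is an `n`-pushout
diagram of the bottom part `X₀ → ⋯ → X_n` along `f₀`: the mapping-cone complex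
`X₀ → X₁ ⊕ Y₀ → ⋯ → X_n ⊕ Y_{n-1} → Y_n` is right exact, written out componentwise. -/
structure IsNPushout {X Y : NComplex C n} (φ : ChainMap X Y) : Prop where
  inj : ∀ k, k + 1 = n → ∀ (W : C) (h : Y.X (k + 1) ⟶ W),
    φ.f (k + 1) ≫ h = 0 → Y.d k ≫ h = 0 → h = 0
  ex1 : 2 ≤ n → ∀ (W : C) (u : X.X 1 ⟶ W) (v : Y.X 0 ⟶ W),
    φ.f 0 ≫ v = X.d 0 ≫ u →
    ∃ (u' : X.X 2 ⟶ W) (v' : Y.X 1 ⟶ W),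
      u = φ.f 1 ≫ v' - X.d 1 ≫ u' ∧ v = Y.d 0 ≫ v'
  exMid : ∀ k, k + 3 ≤ n → ∀ (W : C) (u : X.X (k + 2) ⟶ W) (v : Y.X (k + 1) ⟶ W),
    φ.f (k + 1) ≫ v = X.d (k + 1) ≫ u → Y.d k ≫ v = 0 →
    ∃ (u' : X.X (k + 3) ⟶ W) (v' : Y.X (k + 2) ⟶ W),
      u = φ.f (k + 2) ≫ v' - X.d (k + 2) ≫ u' ∧ v = Y.d (k + 1) ≫ v'
  exTop : ∀ k, k + 2 = n → ∀ (W : C) (u : X.X (k + 2) ⟶ W) (v : Y.X (k + 1) ⟶ W),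
    φ.f (k + 1) ≫ v = X.d (k + 1) ≫ u → Y.d k ≫ v = 0 →
    ∃ h : Y.X (k + 2) ⟶ W, u = φ.f (k + 2) ≫ h ∧ v = Y.d (k + 1) ≫ h
  exTop1 : 1 = n → ∀ (W : C) (u : X.X 1 ⟶ W) (v : Y.X 0 ⟶ W),
    φ.f 0 ≫ v = X.d 0 ≫ u →
    ∃ h : Y.X 1 ⟶ W, u = φ.f 1 ≫ h ∧ v = Y.d 0 ≫ h

/-- `f• : X• → Y•` (with `f₀` an identification of the bottom terms) is an `n`-pullback
diagram of the top part `Y₁ → ⋯ → Y_{n+1}` along `f_{n+1}`: the complex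
`X₁ → X₂ ⊕ Y₁ → ⋯ → X_{n+1} ⊕ Y_n → Y_{n+1}` is left exact, written out componentwise. -/
structure IsNPullback {X Y : NComplex C n} (φ : ChainMap X Y) : Prop where
  inj : ∀ (W : C) (h : W ⟶ X.X 1), h ≫ X.d 1 = 0 → h ≫ φ.f 1 = 0 → h = 0
  ex1 : 2 ≤ n → ∀ (W : C) (u : W ⟶ X.X 2) (v : W ⟶ Y.X 1),
    u ≫ X.d 2 = 0 → u ≫ φ.f 2 + v ≫ Y.d 1 = 0 →
    ∃ w : W ⟶ X.X 1, u = -(w ≫ X.d 1) ∧ v = w ≫ φ.f 1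
  exMid : ∀ k, k + 3 ≤ n → ∀ (W : C) (u : W ⟶ X.X (k + 3)) (v : W ⟶ Y.X (k + 2)),
    u ≫ X.d (k + 3) = 0 → u ≫ φ.f (k + 3) + v ≫ Y.d (k + 2) = 0 →
    ∃ (u₀ : W ⟶ X.X (k + 2)) (v₀ : W ⟶ Y.X (k + 1)),
      u = -(u₀ ≫ X.d (k + 2)) ∧ v = u₀ ≫ φ.f (k + 2) + v₀ ≫ Y.d (k + 1)
  exTop : ∀ k, k + 2 = n → ∀ (W : C) (u : W ⟶ X.X (k + 3)) (v : W ⟶ Y.X (k + 2)),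
    u ≫ φ.f (k + 3) + v ≫ Y.d (k + 2) = 0 →
    ∃ (u₀ : W ⟶ X.X (k + 2)) (v₀ : W ⟶ Y.X (k + 1)),
      u = -(u₀ ≫ X.d (k + 2)) ∧ v = u₀ ≫ φ.f (k + 2) + v₀ ≫ Y.d (k + 1)
  exTop1 : 1 = n → ∀ (W : C) (u : W ⟶ X.X 2) (v : W ⟶ Y.X 1),
    u ≫ φ.f 2 + v ≫ Y.d 1 = 0 →
    ∃ w : W ⟶ X.X 1, u = -(w ≫ X.d 1) ∧ v = w ≫ φ.f 1

variable (C n)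

/-- An `n`-exact category in the sense of Jasso: an additive category together with a class
of `n`-exact sequences (the admissible ones, or conflations), closed under weak
isomorphisms, containing the trivial sequences and satisfying the axioms (E1), (E1ᵒᵖ),
(E2) (existence of `n`-pushouts of conflations along morphisms from the first term) and
(E2ᵒᵖ). -/
structure NExactCategory [HasZeroObject C] where
  conflation : NComplex C n → Prop
  nexact : ∀ X, conflation X → IsNExactSeq X
  closed_weakIso₁ : ∀ (X Y : NComplex C n) (φ : ChainMap X Y),
    conflation X → IsNExactSeq Y → IsWeakIso φ → conflation Y
  closed_weakIso₂ : ∀ (X Y : NComplex C n) (φ : ChainMap X Y),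
    conflation Y → IsNExactSeq X → IsWeakIso φ → conflation X
  e0 : ∀ A : C, conflation (splitCpx A 0)
  e0' : ∀ A : C, conflation (splitCpx A n)
  e1 : ∀ {A B Z : C} (f : A ⟶ B) (g : B ⟶ Z),
    (∃ (X : NComplex C n) (h0 : X.X 0 = A) (h1 : X.X 1 = B), conflation X ∧
        X.d 0 = eqToHom h0 ≫ f ≫ eqToHom h1.symm) →
    (∃ (X : NComplex C n) (h0 : X.X 0 = B) (h1 : X.X 1 = Z), conflation X ∧
        X.d 0 = eqToHom h0 ≫ g ≫ eqToHom h1.symm) →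
    (∃ (X : NComplex C n) (h0 : X.X 0 = A) (h1 : X.X 1 = Z), conflation X ∧
        X.d 0 = eqToHom h0 ≫ (f ≫ g) ≫ eqToHom h1.symm)
  e1op : ∀ {A B Z : C} (f : A ⟶ B) (g : B ⟶ Z),
    (∃ (X : NComplex C n) (h0 : X.X n = A) (h1 : X.X (n + 1) = B), conflation X ∧
        X.d n = eqToHom h0 ≫ f ≫ eqToHom h1.symm) →
    (∃ (X : NComplex C n) (h0 : X.X n = B) (h1 : X.X (n + 1) = Z), conflation X ∧
        X.d n = eqToHom h0 ≫ g ≫ eqToHom h1.symm) →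
    (∃ (X : NComplex C n) (h0 : X.X n = A) (h1 : X.X (n + 1) = Z), conflation X ∧
        X.d n = eqToHom h0 ≫ (f ≫ g) ≫ eqToHom h1.symm)
  e2 : ∀ X, conflation X → ∀ (B : C) (g : X.X 0 ⟶ B),
    ∃ (Y : NComplex C n) (φ : ChainMap X Y) (h0 : Y.X 0 = B)
      (htop : X.X (n + 1) = Y.X (n + 1)),
      φ.f 0 = g ≫ eqToHom h0.symm ∧ φ.f (n + 1) = eqToHom htop ∧
      IsNPushout φ ∧ conflation Y
  e2op : ∀ Y, conflation Y → ∀ (B : C) (g : B ⟶ Y.X (n + 1)),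
    ∃ (X : NComplex C n) (φ : ChainMap X Y) (htop : X.X (n + 1) = B)
      (h0 : X.X 0 = Y.X 0),
      φ.f (n + 1) = eqToHom htop ≫ g ∧ φ.f 0 = eqToHom h0 ∧
      IsNPullback φ ∧ conflation X

end NExact


/-- A distinguished `n`-exangle is minimal if all its inner differentials
`X₁ → X₂, …, X_{n-1} → X_n` lie in the Jacobson radical of `C`. -/
def MinimalCpx {C : Type u} [Category.{v} C] [Preadditive C] {n : ℕ} (X : NComplex C n) :
    Prop :=
  ∀ i, 1 ≤ i → i + 1 ≤ n → InRad (X.d i)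

/-- Direct sum of a finite list of split complexes `split_{p.2}(p.1)`. -/
noncomputable def sumSplitCpx {C : Type u} [Category.{v} C] [Preadditive C] [HasZeroObject C]
    [HasBinaryBiproducts C] {n : ℕ} (L : List (C × ℕ)) : NComplex C n :=
  L.foldr (fun p acc => biprodC (splitCpx p.1 p.2) acc) zeroCpx

/-!
Write `f` as a matrix with radical corner `a = π₁ ∘ f ∘ ι₁`. Expanding `𝟙 Z = g ≫ f ≫ h` along
the biproducts gives `𝟙 Z = x ≫ a ≫ y + u ≫ v` with `u ≫ v` factoring through `X₂ ⊞ Y₂`.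
Since `a` is radical, `u ≫ v = 𝟙 Z - x ≫ a ≫ y` is invertible (Jacobson's lemma moves the
invertibility of `𝟙 - a ≫ (y ≫ x)` to `Z`), so `Z` is a retract of `X₂ ⊞ Y₂`.
-/

section

/-- Jacobson's lemma: if `w` inverts `𝟙 - y ≫ x`, then `𝟙 + x ≫ w ≫ y` inverts `𝟙 - x ≫ y`. -/
lemma isIso_id_sub_comp_of_isIso_id_sub_comp {Z X : C} (x : Z ⟶ X) (y : X ⟶ Z)
    [IsIso (𝟙 X - y ≫ x)] : IsIso (𝟙 Z - x ≫ y) := by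
  set w := inv (𝟙 X - y ≫ x)
  have hw₁ : y ≫ x ≫ w = w - 𝟙 X := by
    have := IsIso.hom_inv_id (𝟙 X - y ≫ x)
    rw [Preadditive.sub_comp, Category.id_comp, Category.assoc] at this
    rw [← this]; abel
  have hw₂ : w ≫ y ≫ x = w - 𝟙 X := by
    have := IsIso.inv_hom_id (𝟙 X - y ≫ x)
    rw [Preadditive.comp_sub, Category.comp_id] at this
    rw [← this]; abel
  refine ⟨𝟙 Z + x ≫ w ≫ y, ?_, ?_⟩
  · simp only [Preadditive.sub_comp, Preadditive.comp_add, Preadditive.comp_sub,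
      Category.id_comp, Category.comp_id, Category.assoc, reassoc_of% hw₁]
    abel
  · simp only [Preadditive.add_comp, Preadditive.comp_sub, Preadditive.sub_comp,
      Category.id_comp, Category.comp_id, Category.assoc, reassoc_of% hw₂]
    abel

lemma InRad.isIso_id_sub_comp_comp {X Y Z : C} {a : X ⟶ Y} (ha : InRad a) (x : Z ⟶ X)
    (y : Y ⟶ Z) : IsIso (𝟙 Z - x ≫ a ≫ y) := by
  have : IsIso (𝟙 X - (a ≫ y) ≫ x) := by simpa only [Category.assoc] using ha (y ≫ x)
  exact isIso_id_sub_comp_of_isIso_id_sub_comp x (a ≫ y)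

noncomputable def retractOfIsIsoComp {Z W : C} (u : Z ⟶ W) (v : W ⟶ Z) (_ : IsIso (u ≫ v)) :
    Retract Z W where
  i := u
  r := v ≫ inv (u ≫ v)
  retract := by rw [← Category.assoc, IsIso.hom_inv_id]

lemma inAdd_of_retract [HasFiniteBiproducts C] {Z W : C} (e : Retract Z W) : InAdd W Z :=
  ⟨1, e.i ≫ biproduct.ι (fun _ : Fin 1 => W) 0, biproduct.π _ 0 ≫ e.r, by simp⟩

variable [HasBinaryBiproducts C]

lemma comp_comp_eq_corner_add_lift_comp_desc {X₁ X₂ Y₁ Y₂ Z Z' : C} (g : Z ⟶ X₁ ⊞ X₂)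
    (f : X₁ ⊞ X₂ ⟶ Y₁ ⊞ Y₂) (h : Y₁ ⊞ Y₂ ⟶ Z') :
    g ≫ f ≫ h = (g ≫ biprod.fst) ≫ (biprod.inl ≫ f ≫ biprod.fst) ≫ (biprod.inl ≫ h) +
      biprod.lift (g ≫ biprod.snd) (g ≫ biprod.fst ≫ biprod.inl ≫ f ≫ biprod.snd) ≫
        biprod.desc (biprod.inr ≫ f ≫ h) (biprod.inr ≫ h) := by
  have hf : f ≫ h = f ≫ biprod.fst ≫ biprod.inl ≫ h + f ≫ biprod.snd ≫ biprod.inr ≫ h := by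
    rw [← Preadditive.comp_add, ← Category.assoc, ← Category.assoc biprod.snd,
      ← Preadditive.add_comp, biprod.total, Category.id_comp]
  have hg : g = g ≫ biprod.fst ≫ biprod.inl + g ≫ biprod.snd ≫ biprod.inr := by
    rw [← Preadditive.comp_add, biprod.total, Category.comp_id]
  conv_lhs => rw [hg]
  simp only [hf, biprod.lift_desc, Preadditive.add_comp, Preadditive.comp_add, Category.assoc]
  abel

noncomputable def retractOfIdFactorsThroughRadCorner {X₁ X₂ Y₁ Y₂ Z : C}
    (f : X₁ ⊞ X₂ ⟶ Y₁ ⊞ Y₂) (hrad : InRad (biprod.inl ≫ f ≫ biprod.fst : X₁ ⟶ Y₁))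
    (g : Z ⟶ X₁ ⊞ X₂) (h : Y₁ ⊞ Y₂ ⟶ Z) (hfac : g ≫ f ≫ h = 𝟙 Z) : Retract Z (X₂ ⊞ Y₂) := by
  have hsum := (comp_comp_eq_corner_add_lift_comp_desc g f h).symm.trans hfac
  have := hrad.isIso_id_sub_comp_comp (g ≫ biprod.fst) (biprod.inl ≫ h)
  rw [← eq_sub_of_add_eq' hsum] at this
  exact retractOfIsIsoComp _ _ this

end

theorem stmt1_general {C : Type u} [Category.{v} C] [Preadditive C] [HasFiniteBiproducts C]
    (X₁ X₂ Y₁ Y₂ : C) (f : X₁ ⊞ X₂ ⟶ Y₁ ⊞ Y₂)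
    (hrad : InRad (biprod.inl ≫ f ≫ biprod.fst : X₁ ⟶ Y₁))
    (Z : C) (g : Z ⟶ X₁ ⊞ X₂) (h : Y₁ ⊞ Y₂ ⟶ Z) (hfac : g ≫ f ≫ h = 𝟙 Z) :
    (∃ (r : Z ⟶ (X₂ ⊞ Y₂) ⊞ (X₂ ⊞ Y₂)) (s : (X₂ ⊞ Y₂) ⊞ (X₂ ⊞ Y₂) ⟶ Z), r ≫ s = 𝟙 Z) ∧
      InAdd (X₂ ⊞ Y₂) Z := by
  let e := retractOfIdFactorsThroughRadCorner f hrad g h hfac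
  let e' := e.trans (BinaryBiproduct.bicone (X₂ ⊞ Y₂) (X₂ ⊞ Y₂)).retract_left
  exact ⟨⟨e'.i, e'.r, e'.retract⟩, inAdd_of_retract e⟩

/-- Let `C` be an additive Krull–Schmidt category and
`f : X₁ ⊕ X₂ ⟶ Y₁ ⊕ Y₂` with `π₁ ∘ f ∘ ι₁` in the Jacobson radical of `C`.  If the identity
of `Z` factors through `f`, then `Z` is a direct summand of `X₂ ⊕ Y₂ ⊕ X₂ ⊕ Y₂`
(in particular `Z ∈ add (X₂ ⊕ Y₂)`). -/
theorem stmt1 {C : Type u} [Category.{v} C] [Preadditive C] [HasFiniteBiproducts C]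
    (hKS : IsKrullSchmidt C) (X₁ X₂ Y₁ Y₂ : C) (f : X₁ ⊞ X₂ ⟶ Y₁ ⊞ Y₂)
    (hrad : InRad (biprod.inl ≫ f ≫ biprod.fst : X₁ ⟶ Y₁))
    (Z : C) (g : Z ⟶ X₁ ⊞ X₂) (h : Y₁ ⊞ Y₂ ⟶ Z) (hfac : g ≫ f ≫ h = 𝟙 Z) :
    (∃ (r : Z ⟶ (X₂ ⊞ Y₂) ⊞ (X₂ ⊞ Y₂)) (s : (X₂ ⊞ Y₂) ⊞ (X₂ ⊞ Y₂) ⟶ Z), r ≫ s = 𝟙 Z) ∧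
      InAdd (X₂ ⊞ Y₂) Z :=
  stmt1_general X₁ X₂ Y₁ Y₂ f hrad Z g h hfac

end NExangPaper
end

section
/- Let (C,E,s) be a Krull–Schmidt n-exangulated category. Then the minimal distinguished n-exangle realizing a given extension δ ∈ E(A_{n+1}, A₀) is unique up to isomorphism of complexes. -/
open CategoryTheory CategoryTheory.Limits Opposite ZeroObject

universe v u

namespace NExangPaper

attribute [local instance] CategoryTheory.Limits.hasBinaryBiproducts_of_finite_biproducts


variable {C : Type u} [Category.{v} C] [Preadditive C]

variable {n : ℕ}

/-
By (R0) both minimal realizations of `δ` are homotopy equivalent with fixed ends,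
say via `φ : X → Y` and `ψ : Y → X`. If `s` is a homotopy from `θ = ψ ∘ φ` to the identity,
then `d ∘ d = 0` factors each inner component as
`θ_{i+1} = (1 + s_i d_i)(1 + d_{i+1} s_{i+1})`. Each factor is invertible: in the inner range
because the differential lies in the radical, and at the two ends because the fixed end maps
force `s₀ d₀` resp. `d_n s_n` to square to zero. So `ψ ∘ φ` and likewise `φ ∘ ψ` are
isomorphisms in every degree, hence so is `φ`.
-/

section Radical

variable {C : Type u} [Category.{v} C]

lemma isIso_of_isIso_comp_of_isIso_comp {X Y : C} (a : X ⟶ Y) (b : Y ⟶ X)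
    [IsIso (a ≫ b)] [IsIso (b ≫ a)] : IsIso a :=
  have : Mono a := mono_of_mono a b
  have : IsSplitEpi a := IsSplitEpi.mk' ⟨inv (b ≫ a) ≫ b, by simp⟩
  isIso_of_mono_of_isSplitEpi a

variable [Preadditive C]

lemma isIso_id_sub_comp_swap {X Y : C} (f : X ⟶ Y) (g : Y ⟶ X) [IsIso (𝟙 X - f ≫ g)] :
    IsIso (𝟙 Y - g ≫ f) := by
  set u := inv (𝟙 X - f ≫ g)
  have hu₁ : (𝟙 X - f ≫ g) ≫ u = 𝟙 X := IsIso.hom_inv_id _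
  have hu₂ : u ≫ (𝟙 X - f ≫ g) = 𝟙 X := IsIso.inv_hom_id _
  -- the usual inverse `1 + g (1 - f g)⁻¹ f` of `1 - g f`
  refine ⟨𝟙 Y + g ≫ u ≫ f, ?_, ?_⟩
  · have h := congr(g ≫ $hu₁ ≫ f)
    simp only [Preadditive.sub_comp, Preadditive.comp_sub, Preadditive.comp_add,
      Category.id_comp, Category.comp_id, Category.assoc] at h ⊢
    linear_combination (norm := abel) h
  · have h := congr(g ≫ $hu₂ ≫ f)
    simp only [Preadditive.sub_comp, Preadditive.comp_sub, Preadditive.add_comp,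
      Category.id_comp, Category.comp_id, Category.assoc] at h ⊢
    linear_combination (norm := abel) h

lemma InRad.isIso_id_add_comp_left {X Y : C} {f : X ⟶ Y} (hf : InRad f) (g : Y ⟶ X) :
    IsIso (𝟙 X + f ≫ g) := by
  simpa only [Preadditive.comp_neg, sub_neg_eq_add] using hf (-g)

lemma InRad.isIso_id_add_comp_right {X Y : C} {f : X ⟶ Y} (hf : InRad f) (g : Y ⟶ X) :
    IsIso (𝟙 Y + g ≫ f) := by
  have := hf (-g)
  simpa only [Preadditive.neg_comp, Preadditive.comp_neg, sub_neg_eq_add] using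
    isIso_id_sub_comp_swap f (-g)

lemma isIso_id_add_of_comp_self_eq_zero {X : C} (a : X ⟶ X) (h : a ≫ a = 0) :
    IsIso (𝟙 X + a) :=
  ⟨𝟙 X - a, by simp [Preadditive.comp_sub, Preadditive.add_comp, h],
    by simp [Preadditive.sub_comp, Preadditive.comp_add, h]⟩

end Radical

section Complexes

variable {C : Type u} [Category.{v} C] [Preadditive C] {n : ℕ}

noncomputable def CpxIso.ofIsIso {X Y : NComplex C n} (φ : ChainMap X Y)
    (hφ : ∀ i, i ≤ n + 1 → IsIso (φ.f i)) : CpxIso X Y where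
  e i hi := have := hφ i hi; asIso (φ.f i)
  comm i hi := φ.comm i hi

namespace Homotopy'

variable {X : NComplex C n} {θ : ChainMap X X} (H : Homotopy' θ (ChainMap.id X))
include H

lemma d_zero_comp_s_zero_eq_zero (h0 : θ.f 0 = 𝟙 _) : X.d 0 ≫ H.s 0 = 0 := by
  simpa [ChainMap.id, h0] using H.comm0.symm

lemma s_top_comp_d_top_eq_zero (htop : θ.f (n + 1) = 𝟙 _) : H.s n ≫ X.d n = 0 := by
  simpa [ChainMap.id, htop] using H.commTop.symm

lemma f_succ_eq_comp {i : ℕ} (hi : i + 1 ≤ n) :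
    θ.f (i + 1) = (𝟙 _ + H.s i ≫ X.d i) ≫ (𝟙 _ + X.d (i + 1) ≫ H.s (i + 1)) := by
  have hdd : X.d i ≫ X.d (i + 1) ≫ H.s (i + 1) = 0 := by
    rw [← Category.assoc, X.dd i hi, zero_comp]
  have hcomm : θ.f (i + 1) - 𝟙 _ = H.s i ≫ X.d i + X.d (i + 1) ≫ H.s (i + 1) := by
    simpa [ChainMap.id] using H.comm i hi
  rw [eq_add_of_sub_eq hcomm]
  simp only [Preadditive.add_comp, Preadditive.comp_add, Category.id_comp, Category.comp_id,
    Category.assoc, hdd, comp_zero]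
  abel

end Homotopy'

lemma MinimalCpx.isIso_of_homotopy_id {X : NComplex C n} (hX : MinimalCpx X)
    {θ : ChainMap X X} (H : Homotopy' θ (ChainMap.id X)) (h0 : θ.f 0 = 𝟙 _)
    (htop : θ.f (n + 1) = 𝟙 _) (i : ℕ) (hi : i ≤ n + 1) : IsIso (θ.f i) := by
  by_cases hi0 : i = 0
  · subst hi0; rw [h0]; infer_instance
  by_cases hin : i = n + 1
  · subst hin; rw [htop]; infer_instance
  obtain ⟨j, rfl⟩ : ∃ j, i = j + 1 := ⟨i - 1, by omega⟩
  rw [H.f_succ_eq_comp (by omega)]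
  have hleft : IsIso (𝟙 _ + H.s j ≫ X.d j) := by
    rcases Nat.eq_zero_or_pos j with hj0 | hj0
    · refine isIso_id_add_of_comp_self_eq_zero _ ?_
      rw [hj0, Category.assoc, ← Category.assoc (X.d 0), H.d_zero_comp_s_zero_eq_zero h0]
      simp
    · exact (hX j hj0 (by omega)).isIso_id_add_comp_right _
  have hright : IsIso (𝟙 _ + X.d (j + 1) ≫ H.s (j + 1)) := by
    rcases Nat.lt_or_eq_of_le (show j + 1 ≤ n by omega) with hjn | hjn
    · exact (hX (j + 1) (by omega) hjn).isIso_id_add_comp_left _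
    · refine isIso_id_add_of_comp_self_eq_zero _ ?_
      rw [hjn, Category.assoc, ← Category.assoc (H.s n), H.s_top_comp_d_top_eq_zero htop]
      simp
  exact IsIso.comp_isIso' hleft hright

lemma FixedHtpyEquiv.nonempty_cpxIso {X Y : NComplex C n} {h0 : X.X 0 = Y.X 0}
    {h1 : X.X (n + 1) = Y.X (n + 1)} (h : FixedHtpyEquiv X Y h0 h1) (hX : MinimalCpx X)
    (hY : MinimalCpx Y) : Nonempty (CpxIso X Y) := by
  obtain ⟨φ, ψ, hφ0, hφ1, hψ0, hψ1, ⟨HX⟩, ⟨HY⟩⟩ := h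
  refine ⟨CpxIso.ofIsIso φ fun i hi => ?_⟩
  have : IsIso (φ.f i ≫ ψ.f i) :=
    hX.isIso_of_homotopy_id HX (by simp [ChainMap.comp, hφ0, hψ0])
      (by simp [ChainMap.comp, hφ1, hψ1]) i hi
  have : IsIso (ψ.f i ≫ φ.f i) :=
    hY.isIso_of_homotopy_id HY (by simp [ChainMap.comp, hφ0, hψ0])
      (by simp [ChainMap.comp, hφ1, hψ1]) i hi
  exact isIso_of_isIso_comp_of_isIso_comp (φ.f i) (ψ.f i)

end Complexes

theorem stmt6_general {C : Type u} [Category.{v} C] [Preadditive C] [HasZeroObject C]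
    {n : ℕ} (S : NExang C n)
    (X Y : NComplex C n)
    (δ : (S.E.obj (op (X.X (n + 1)))).obj (X.X 0))
    (h0 : X.X 0 = Y.X 0) (h1 : X.X (n + 1) = Y.X (n + 1))
    (hX : S.Dist X δ) (hY : S.Dist Y (ETransport S.E h0 h1 δ))
    (hmX : MinimalCpx X) (hmY : MinimalCpx Y) :
    Nonempty (CpxIso X Y) :=
  (S.unique X Y δ h0 h1 hX hY).nonempty_cpxIso hmX hmY

/-- Remark 3.4.  In a Krull–Schmidt `n`-exangulated category, the minimal
distinguished `n`-exangle realizing a given extension `δ` is unique up to isomorphism of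
complexes. -/
theorem stmt6 {C : Type u} [Category.{v} C] [Preadditive C] [HasZeroObject C]
    [HasFiniteBiproducts C] {n : ℕ} (hn : 0 < n) (S : NExang C n)
    (hKS : IsKrullSchmidt C) (X Y : NComplex C n)
    (δ : (S.E.obj (op (X.X (n + 1)))).obj (X.X 0))
    (h0 : X.X 0 = Y.X 0) (h1 : X.X (n + 1) = Y.X (n + 1))
    (hX : S.Dist X δ) (hY : S.Dist Y (ETransport S.E h0 h1 δ))
    (hmX : MinimalCpx X) (hmY : MinimalCpx Y) :
    Nonempty (CpxIso X Y) :=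
  stmt6_general S X Y δ h0 h1 hX hY hmX hmY

end NExangPaper
end
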